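/- Let T = { x ∈ ℝ : x = ∑_{i=1}^∞ d_i 3^{−i} for some digits d_i ∈ {0,2} } be the Cantor set, and let T_ex = { x ∈ ℝ : x − ⌊x⌋ ∈ T }. There exists a memoryless algorithm M : {L,R} × ℝ → ℝ that solves the exact midpoint localization problem for all lengths whose fractional part is not in the Cantor set: for every real D with 1 < D < ∞ and D ∉ T_ex, the dynamics F_D induced by M maps [-D,D] into [-D,D], and for every x₀ ∈ [-D,D] there exists a finite integer n ≥ 0 such that F_D^n(x₀) = 0. -/
import Mathlib


inductive Side
  | L
  | R

/-- The exact dynamics on `[-D, D]` induced by the memoryless algorithm `M`: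
the walker at `x > 0` observes `(R, D - x)`, at `x < 0` observes `(L, D + x)`,
and moves by the displacement `M` prescribes; it stays at the midpoint `0`. -/
noncomputable def step (M : Side × ℝ → ℝ) (D x : ℝ) : ℝ :=
  if 0 < x then x + M (Side.R, D - x)
  else if x < 0 then x + M (Side.L, D + x)
  else 0

/-- The Cantor set: reals of the form `∑_{i≥1} d_i 3^{-i}` with digits `d_i ∈ {0,2}`. -/
def ternaryCantorSet : Set ℝ :=
  {x : ℝ | ∃ d : ℕ → ℝ, (∀ i, d i = 0 ∨ d i = 2) ∧ x = ∑' i : ℕ, d i / 3 ^ (i + 1)}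

/-- Reals whose fractional part lies in the Cantor set. -/
def ternaryCantorSetEx : Set ℝ := {x : ℝ | x - (⌊x⌋ : ℝ) ∈ ternaryCantorSet}

open Classical in
noncomputable def Mstar : Side × ℝ → ℝ := fun sd =>
  match sd with
  | (Side.R, d) =>
      if ∃ n : ℤ, d = n * (1/24 : ℝ) then -(1/24)
      else if (∃ n : ℤ, d = n * (1/72 : ℝ)) ∧ (1/3 : ℝ) ≤ d then
        (if Even ⌊d * 72⌋ then (1/2 : ℝ) else 7/12) - d
      else d - (1/24 : ℝ) * (⌊d * 24⌋ + 1)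
  | (Side.L, e) =>
      if (1/2 : ℝ) < e ∧ e < 5/9 then
        (((e - 1/2) / 2) - e) - (1/36 : ℝ) * ⌊(((e - 1/2) / 2) - e) * 36⌋ + 1/6
      else if (7/12 : ℝ) < e ∧ e < 23/36 then
        ((1/72 + (e - 7/12) / 2) - e) - (1/36 : ℝ) * ⌊((1/72 + (e - 7/12) / 2) - e) * 36⌋ + 1/6
      else (1/36 : ℝ)

open Classical

lemma MR_def (d : ℝ) : Mstar (Side.R, d) =
    (if ∃ n : ℤ, d = n * (1/24 : ℝ) then -(1/24)
      else if (∃ n : ℤ, d = n * (1/72 : ℝ)) ∧ (1/3 : ℝ) ≤ d then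
        (if Even ⌊d * 72⌋ then (1/2 : ℝ) else 7/12) - d
      else d - (1/24 : ℝ) * (⌊d * 24⌋ + 1)) := rfl

lemma ML_def (e : ℝ) : Mstar (Side.L, e) =
    (if (1/2 : ℝ) < e ∧ e < 5/9 then
        (((e - 1/2) / 2) - e) - (1/36 : ℝ) * ⌊(((e - 1/2) / 2) - e) * 36⌋ + 1/6
      else if (7/12 : ℝ) < e ∧ e < 23/36 then
        ((1/72 + (e - 7/12) / 2) - e) - (1/36 : ℝ) * ⌊((1/72 + (e - 7/12) / 2) - e) * 36⌋ + 1/6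
      else (1/36 : ℝ)) := rfl

lemma MR_walk {d : ℝ} (h : ∃ n : ℤ, d = n * (1/24 : ℝ)) :
    Mstar (Side.R, d) = -(1/24) := by
  rw [MR_def, if_pos h]

lemma MR_echo {d : ℝ} (h2 : ¬ ∃ n : ℤ, d = n * (1/24 : ℝ))
    (h6 : ∃ n : ℤ, d = n * (1/72 : ℝ)) (h3 : (1/3 : ℝ) ≤ d) :
    Mstar (Side.R, d) = (if Even ⌊d * 72⌋ then (1/2 : ℝ) else 7/12) - d := by
  rw [MR_def, if_neg h2, if_pos ⟨h6, h3⟩]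

lemma MR_snap {d : ℝ} (h2 : ¬ ∃ n : ℤ, d = n * (1/24 : ℝ))
    (h : ¬ ((∃ n : ℤ, d = n * (1/72 : ℝ)) ∧ (1/3 : ℝ) ≤ d)) :
    Mstar (Side.R, d) = d - (1/24 : ℝ) * (⌊d * 24⌋ + 1) := by
  rw [MR_def, if_neg h2, if_neg h]

lemma ML_band0 {e : ℝ} (h1 : (1/2 : ℝ) < e) (h2 : e < 5/9) :
    Mstar (Side.L, e) = (((e - 1/2) / 2) - e) - (1/36 : ℝ) * ⌊(((e - 1/2) / 2) - e) * 36⌋ + 1/6 := by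
  rw [ML_def, if_pos ⟨h1, h2⟩]

lemma ML_band1 {e : ℝ} (h1 : (7/12 : ℝ) < e) (h2 : e < 23/36) :
    Mstar (Side.L, e) = ((1/72 + (e - 7/12) / 2) - e) - (1/36 : ℝ) * ⌊((1/72 + (e - 7/12) / 2) - e) * 36⌋ + 1/6 := by
  have hb : ¬ ((1/2 : ℝ) < e ∧ e < 5/9) := by
    rintro ⟨-, hlt⟩; nlinarith
  rw [ML_def, if_neg hb, if_pos ⟨h1, h2⟩]

lemma ML_climb {e : ℝ} (hb0 : ¬ ((1/2 : ℝ) < e ∧ e < 5/9))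
    (hb1 : ¬ ((7/12 : ℝ) < e ∧ e < 23/36)) :
    Mstar (Side.L, e) = (1/36 : ℝ) := by
  rw [ML_def, if_neg hb0, if_neg hb1]

def terminatesIn (D x : ℝ) : Prop := ∃ n : ℕ, (step Mstar D)^[n] x = 0

lemma step_pos {D x : ℝ} (hx : 0 < x) : step Mstar D x = x + Mstar (Side.R, D - x) := by
  simp [step, hx]

lemma step_neg {D x : ℝ} (hx : x < 0) : step Mstar D x = x + Mstar (Side.L, D + x) := by
  simp [step, hx, not_lt_of_gt hx, asymm hx]

lemma term_zero (D : ℝ) : terminatesIn D 0 := ⟨0, rfl⟩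

lemma term_of_step {D x : ℝ} (h : terminatesIn D (step Mstar D x)) : terminatesIn D x := by
  obtain ⟨n, hn⟩ := h
  exact ⟨n + 1, by rwa [Function.iterate_succ_apply]⟩

lemma term_of_eq {D x : ℝ} (h : step Mstar D x = 0) : terminatesIn D x :=
  term_of_step (h ▸ term_zero D)

/-- A value not in either band, with `23/36 ≤ e`, gets the climb action. -/
lemma ML_high {e : ℝ} (he : (23/36 : ℝ) ≤ e) : Mstar (Side.L, e) = (1/36 : ℝ) := by
  apply ML_climb
  · rintro ⟨-, h⟩; nlinarith
  · rintro ⟨-, h⟩; nlinarith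

/-- Final climb: if the left-distance is `≥ 23/36` and `D - e` is an exact positive
multiple of `1/36`, the climb reaches `0` exactly. -/
lemma finalClimb : ∀ (k : ℕ) {D x : ℝ}, x = -(((k : ℝ) + 1)/36) → (23/36 : ℝ) ≤ D + x →
    terminatesIn D x := by
  intro k
  induction k with
  | zero =>
    intro D x hx he
    have hxneg : x < 0 := by rw [hx]; norm_num
    apply term_of_eq
    rw [step_neg hxneg, ML_high he, hx]
    norm_num
  | succ k ih =>
    intro D x hx he
    have hxneg : x < 0 := by
      rw [hx]; push_cast
      have : (0:ℝ) < ((k:ℝ) + 1 + 1)/36 := by positivity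
      linarith
    apply term_of_step
    rw [step_neg hxneg, ML_high he]
    apply ih
    · rw [hx]; push_cast; ring
    · have : D + x ≤ D + (x + 1/36) := by linarith
      linarith

/-- Generic band action: if the action jumps to a value `≡ ρ (mod 1/36)` where
`D ≡ ρ (mod 1/36)`, we reach an exact final climb. -/
lemma bandStep {D x ρ : ℝ} (hD : 1 < D) (hx : x < 0)
    (hML : Mstar (Side.L, D + x)
      = (ρ - (D + x)) - (1/36 : ℝ) * ⌊(ρ - (D + x)) * 36⌋ + 1/6)
    (hres : ∃ j : ℤ, D - ρ = (j : ℝ) * (1/36))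
    (hlo : (1/2 : ℝ) < D + x) (hhi : D + x < 23/36) : terminatesIn D x := by
  obtain ⟨j, hj⟩ := hres
  set e := D + x with he
  set J : ℤ := ⌊(ρ - e) * 36⌋ with hJ
  have hJle : (J : ℝ) ≤ (ρ - e) * 36 := Int.floor_le _
  have hJgt : (ρ - e) * 36 < (J : ℝ) + 1 := Int.lt_floor_add_one _
  apply term_of_step
  rw [step_neg hx, hML]
  set y := x + ((ρ - e) - (1/36 : ℝ) * J + 1/6) with hy
  have he3 : D + y = e + ((ρ - e) - (1/36 : ℝ) * J) + 1/6 := by rw [hy]; ring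
  have hImod0 : 0 ≤ (ρ - e) - (1/36 : ℝ) * J := by linarith
  have hImod1 : (ρ - e) - (1/36 : ℝ) * J < 1/36 := by linarith
  have he3lo : (2/3 : ℝ) < D + y := by rw [he3]; linarith
  have he3hi : D + y < 5/6 := by rw [he3]; linarith
  clear_value e J y
  have hyneg : y < 0 := by linarith
  -- residue: D - (D + y) = (j + J - 6)/36
  have hmres : -y = ((j + J - 6 : ℤ) : ℝ) / 36 := by
    have : -y = (D - ρ) + (1/36 : ℝ) * J - 1/6 := by rw [hy, he]; ring
    rw [this, hj]; push_cast; ring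
  have hmpos : (1 : ℤ) ≤ j + J - 6 := by
    by_contra hcon
    push_neg at hcon
    have : ((j + J - 6 : ℤ) : ℝ) ≤ 0 := by exact_mod_cast Int.lt_add_one_iff.mp (by omega)
    have : -y ≤ 0 := by rw [hmres]; linarith
    linarith
  set m : ℤ := j + J - 6 with hm
  have hk : ((m - 1).toNat : ℝ) = (m : ℝ) - 1 := by
    have : ((m - 1).toNat : ℤ) = m - 1 := Int.toNat_of_nonneg (by omega)
    exact_mod_cast congrArg (fun z : ℤ => (z : ℝ)) this
  apply finalClimb (m - 1).toNat
  · rw [hk]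
    have : y = -(((m : ℝ))/36) := by rw [← hmres]; ring
    rw [this]; ring
  · linarith

lemma band0Correct {D x : ℝ} (hD : 1 < D) (hx : x < 0)
    (h1 : (1/2 : ℝ) < D + x) (h2 : D + x < 5/9)
    (hres : ∃ j : ℤ, D - ((D + x) - 1/2)/2 = (j : ℝ) * (1/36)) : terminatesIn D x :=
  bandStep hD hx (ML_band0 h1 h2) hres h1 (lt_trans h2 (by norm_num))

lemma band1Correct {D x : ℝ} (hD : 1 < D) (hx : x < 0)
    (h1 : (7/12 : ℝ) < D + x) (h2 : D + x < 23/36)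
    (hres : ∃ j : ℤ, D - (1/72 + ((D + x) - 7/12)/2) = (j : ℝ) * (1/36)) : terminatesIn D x :=
  bandStep hD hx (ML_band1 h1 h2) hres (lt_trans (by norm_num) h1) h2

/-- Echo state: position in `(0, 1/36)`, distance on the `1/72`-lattice but not the
`1/24`-lattice.  The mirror jump lands in the correct band and the decode is exact. -/
lemma echoCorrect {D x : ℝ} (hD : 1 < D) (h0 : 0 < x) (h1 : x < 1/36)
    (N : ℤ) (hvN : D - x = (N : ℝ) * (1/72)) (h3 : ¬ (3 ∣ N)) : terminatesIn D x := by
  have h24 : ¬ ∃ n : ℤ, D - x = (n : ℝ) * (1/24 : ℝ) := by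
    rintro ⟨n, hn⟩
    apply h3
    have : (N : ℝ) = 3 * n := by
      rw [hn] at hvN
      field_simp at hvN
      linarith
    exact ⟨n, by exact_mod_cast this⟩
  have h13 : (1/3 : ℝ) ≤ D - x := by linarith
  have hfl : ⌊(D - x) * 72⌋ = N := by
    rw [hvN]
    have : (N : ℝ) * (1/72) * 72 = (N : ℝ) := by ring
    rw [this, Int.floor_intCast]
  apply term_of_step
  rw [step_pos h0, MR_echo h24 ⟨N, hvN⟩ h13, hfl]
  rcases Int.even_or_odd N with hN | hN
  · -- Even: band 0
    rw [if_pos hN]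
    obtain ⟨j, hj⟩ := hN
    set y := x + ((1/2 : ℝ) - (D - x)) with hy
    have hDy : D + y = 2 * x + 1/2 := by rw [hy]; ring
    clear_value y
    have hyneg : y < 0 := by linarith
    have hNcast : (N : ℝ) = 2 * (j : ℝ) := by
      have : (N : ℝ) = (j : ℝ) + (j : ℝ) := by exact_mod_cast congrArg (fun z : ℤ => (z : ℝ)) hj
      linarith
    apply band0Correct hD hyneg
    · rw [hDy]; linarith
    · rw [hDy]; linarith
    · refine ⟨j, ?_⟩
      have hx' : (D + y - 1/2)/2 = x := by rw [hDy]; ring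
      rw [hx', hvN, hNcast]; ring
  · -- Odd: band 1
    rw [if_neg (Int.not_even_iff_odd.mpr hN)]
    obtain ⟨j, hj⟩ := hN
    set y := x + ((7/12 : ℝ) - (D - x)) with hy
    have hDy : D + y = 2 * x + 7/12 := by rw [hy]; ring
    clear_value y
    have hyneg : y < 0 := by linarith
    have hNcast : (N : ℝ) = 2 * (j : ℝ) + 1 := by exact_mod_cast congrArg (fun z : ℤ => (z : ℝ)) hj
    apply band1Correct hD hyneg
    · rw [hDy]; linarith
    · rw [hDy]; linarith
    · refine ⟨j, ?_⟩
      have hx' : 1/72 + (D + y - 7/12)/2 = x + 1/72 := by rw [hDy]; ring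
      rw [hx']
      rw [show D - (x + 1/72) = (D - x) - 1/72 by ring, hvN, hNcast]; ring

/-- Left position just below a `1/24`-grid point that lies just above `D`:
the climb crosses within two steps into a correct echo state (or hits `0`). -/
lemma e1Climb {D x : ℝ} (hD : 1 < D) (hx : x < 0) (hxlo : -(1/24 : ℝ) < x)
    (hgrid : ∃ n : ℤ, D - x = (n : ℝ) * (1/24 : ℝ)) : terminatesIn D x := by
  obtain ⟨n, hn⟩ := hgrid
  have hhigh : (23/36 : ℝ) ≤ D + x := by linarith
  rcases lt_trichotomy (x + 1/36) 0 with hc | hc | hc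
  · -- two climb steps
    apply term_of_step
    rw [step_neg hx, ML_high hhigh]
    apply term_of_step
    rw [step_neg hc, ML_high (by linarith)]
    have h2pos : 0 < x + 1/36 + 1/36 := by linarith
    have h2lt : x + 1/36 + 1/36 < 1/36 := by linarith
    apply echoCorrect hD h2pos h2lt (3*n - 4)
    · rw [show D - (x + 1/36 + 1/36) = (D - x) - 2/36 by ring, hn]
      push_cast; ring
    · omega
  · -- exact hit
    apply term_of_step
    rw [step_neg hx, ML_high hhigh]
    rw [hc]; exact term_zero D
  · -- one climb step
    apply term_of_step
    rw [step_neg hx, ML_high hhigh]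
    have hlt : x + 1/36 < 1/36 := by linarith
    apply echoCorrect hD hc hlt (3*n - 2)
    · rw [show D - (x + 1/36) = (D - x) - 1/36 by ring, hn]
      push_cast; ring
    · omega

/-- Any arrival on the right at position in `(0, 1/36)` terminates. -/
lemma rightArrival {D x : ℝ} (hD : 1 < D) (h0 : 0 < x) (h1 : x < 1/36) :
    terminatesIn D x := by
  by_cases h24 : ∃ n : ℤ, D - x = (n : ℝ) * (1/24 : ℝ)
  · -- walk state: one step crosses
    obtain ⟨n, hn⟩ := h24
    apply term_of_step
    rw [step_pos h0, MR_walk ⟨n, hn⟩]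
    have hx' : x + -(1/24) < 0 := by linarith
    apply e1Climb hD hx' (by linarith)
    exact ⟨n + 1, by rw [show D - (x + -(1/24)) = (D - x) + 1/24 by ring, hn]; push_cast; ring⟩
  · by_cases h72 : ∃ m : ℤ, D - x = (m : ℝ) * (1/72 : ℝ)
    · obtain ⟨m, hm⟩ := h72
      have h3m : ¬ (3 ∣ m) := by
        rintro ⟨c, hc⟩
        exact h24 ⟨c, by rw [hm, hc]; push_cast; ring⟩
      exact echoCorrect hD h0 h1 m hm h3m
    · -- snap state
      set v := D - x with hv
      set K : ℤ := ⌊v * 24⌋ with hK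
      have hKle : (K : ℝ) ≤ v * 24 := Int.floor_le _
      have hKgt : v * 24 < (K : ℝ) + 1 := Int.lt_floor_add_one _
      have hne : v * 24 ≠ (K : ℝ) := by
        intro hEq
        exact h24 ⟨K, by rw [hv] at hEq ⊢; linarith⟩
      have hKlt : (K : ℝ) < v * 24 := lt_of_le_of_ne hKle (Ne.symm hne)
      have hsnap : step Mstar D x = D - (1/24 : ℝ) * ((K : ℝ) + 1) := by
        rw [step_pos h0, MR_snap h24 (by tauto)]
        rw [hv]; ring
      set A : ℝ := (1/24 : ℝ) * ((K : ℝ) + 1) with hA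
      have hAgt : v < A := by rw [hA]; nlinarith
      have hAle : A < v + 1/24 := by rw [hA]; nlinarith
      rcases lt_trichotomy A D with hAD | hAD | hAD
      · -- undershoot: walk state at distance `A`, position in (0, 1/36)
        apply term_of_step
        rw [hsnap]
        have h0' : 0 < D - A := by linarith
        have h1' : D - A < 1/36 := by
          have : x = D - v := by rw [hv]; ring
          linarith
        apply term_of_step
        rw [step_pos h0', MR_walk ⟨K + 1, by push_cast; ring⟩]
        have hx2 : D - A + -(1/24) < 0 := by linarith
        apply e1Climb hD hx2 (by linarith)
        exact ⟨K + 2, by rw [show D - (D - A + -(1/24)) = A + 1/24 by ring, hA]; push_cast; ring⟩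
      · -- exact hit
        exact term_of_eq (by rw [hsnap, hAD]; ring)
      · -- overshoot: crossing
        apply term_of_step
        rw [hsnap]
        have hx2 : D - A < 0 := by linarith
        have hxlo : -(1/24 : ℝ) < D - A := by
          have : x = D - v := by rw [hv]; ring
          linarith
        apply e1Climb hD hx2 hxlo
        exact ⟨K + 1, by rw [show D - (D - A) = A by ring, hA]; push_cast; ring⟩

/-- High climb: may cross, in which case we land in `(0, 1/36)` on the right. -/
lemma climbHigh : ∀ (k : ℕ) {D x : ℝ}, 1 < D → x < 0 → (23/36 : ℝ) ≤ D + x →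
    -x ≤ (k : ℝ)/36 → terminatesIn D x := by
  intro k
  induction k with
  | zero =>
    intro D x hD hx hhigh hk
    norm_num at hk
    linarith
  | succ k ih =>
    intro D x hD hx hhigh hk
    apply term_of_step
    rw [step_neg hx, ML_high hhigh]
    rcases lt_trichotomy (x + 1/36) 0 with hc | hc | hc
    · apply ih hD hc (by linarith)
      push_cast at hk ⊢
      linarith
    · rw [hc]; exact term_zero D
    · exact rightArrival hD hc (by linarith)

lemma bandStepAny {D x ρ : ℝ} (hD : 1 < D) (hx : x < 0)
    (hML : Mstar (Side.L, D + x)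
      = (ρ - (D + x)) - (1/36 : ℝ) * ⌊(ρ - (D + x)) * 36⌋ + 1/6)
    (hlo : (1/2 : ℝ) < D + x) (hhi : D + x < 23/36) : terminatesIn D x := by
  set e := D + x with he
  set J : ℤ := ⌊(ρ - e) * 36⌋ with hJ
  have hJle : (J : ℝ) ≤ (ρ - e) * 36 := Int.floor_le _
  have hJgt : (ρ - e) * 36 < (J : ℝ) + 1 := Int.lt_floor_add_one _
  apply term_of_step
  rw [step_neg hx, hML]
  set y := x + ((ρ - e) - (1/36 : ℝ) * J + 1/6) with hy
  have he3 : D + y = e + ((ρ - e) - (1/36 : ℝ) * J) + 1/6 := by rw [hy]; ring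
  clear_value e J y
  have hImod0 : 0 ≤ (ρ - e) - (1/36 : ℝ) * J := by linarith
  have hImod1 : (ρ - e) - (1/36 : ℝ) * J < 1/36 := by linarith
  have he3lo : (2/3 : ℝ) < D + y := by rw [he3]; linarith
  have he3hi : D + y < 5/6 := by rw [he3]; linarith
  have hyneg : y < 0 := by linarith
  obtain ⟨k, hk⟩ := exists_nat_ge (36 * D)
  apply climbHigh k hD hyneg (by linarith)
  have : -y < D := by linarith
  linarith

/-- Any band state terminates. -/
lemma bandAny {D x : ℝ} (hD : 1 < D) (hx : x < 0)
    (hband : ((1/2 : ℝ) < D + x ∧ D + x < 5/9) ∨ ((7/12 : ℝ) < D + x ∧ D + x < 23/36)) :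
    terminatesIn D x := by
  rcases hband with ⟨h1, h2⟩ | ⟨h1, h2⟩
  · exact bandStepAny hD hx (ML_band0 h1 h2) h1 (lt_trans h2 (by norm_num))
  · exact bandStepAny hD hx (ML_band1 h1 h2) (lt_trans (by norm_num) h1) h2

/-- Every left position terminates. -/
lemma leftAll : ∀ (k : ℕ) {D x : ℝ}, 1 < D → x < 0 →
    (23/36 : ℝ) - (D + x) ≤ (k : ℝ)/36 → terminatesIn D x := by
  intro k
  induction k with
  | zero =>
    intro D x hD hx hk
    norm_num at hk
    obtain ⟨k', hk'⟩ := exists_nat_ge (36 * D)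
    apply climbHigh k' hD hx (by linarith)
    have : -x < D := by linarith
    linarith
  | succ k ih =>
    intro D x hD hx hk
    by_cases hhigh : (23/36 : ℝ) ≤ D + x
    · obtain ⟨k', hk'⟩ := exists_nat_ge (36 * D)
      apply climbHigh k' hD hx hhigh
      have : -x < D := by linarith
      linarith
    · push_neg at hhigh
      by_cases hb0 : (1/2 : ℝ) < D + x ∧ D + x < 5/9
      · exact bandAny hD hx (Or.inl hb0)
      · by_cases hb1 : (7/12 : ℝ) < D + x ∧ D + x < 23/36
        · exact bandAny hD hx (Or.inr hb1)
        · apply term_of_step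
          rw [step_neg hx, ML_climb hb0 hb1]
          have hx' : x + 1/36 < 0 := by linarith
          apply ih hD hx'
          push_cast at hk ⊢
          linarith

/-- Walk states terminate: the walk ascends the `1/24`-grid to an exact hit or a crossing. -/
lemma walkOnly : ∀ (k : ℕ) {D x : ℝ}, 1 < D → 0 < x →
    (∃ n : ℤ, D - x = (n : ℝ) * (1/24 : ℝ)) → x ≤ (k : ℝ)/24 → terminatesIn D x := by
  intro k
  induction k with
  | zero =>
    intro D x hD h0 _ hk
    norm_num at hk
    linarith
  | succ k ih =>
    intro D x hD h0 hgrid hk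
    obtain ⟨n, hn⟩ := hgrid
    apply term_of_step
    rw [step_pos h0, MR_walk ⟨n, hn⟩]
    rcases lt_trichotomy (x + -(1/24)) 0 with hc | hc | hc
    · apply e1Climb hD hc (by linarith)
      exact ⟨n + 1, by rw [show D - (x + -(1/24)) = (D - x) + 1/24 by ring, hn]; push_cast; ring⟩
    · rw [hc]; exact term_zero D
    · apply ih hD hc ⟨n + 1, by rw [show D - (x + -(1/24)) = (D - x) + 1/24 by ring, hn]; push_cast; ring⟩
      push_cast at hk ⊢
      linarith

/-- Snap states terminate. -/
lemma snapStart {D x : ℝ} (hD : 1 < D) (h0 : 0 < x) (hxD : x ≤ D)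
    (h24 : ¬ ∃ n : ℤ, D - x = (n : ℝ) * (1/24 : ℝ))
    (hcls : ¬ ((∃ n : ℤ, D - x = (n : ℝ) * (1/72 : ℝ)) ∧ (1/3 : ℝ) ≤ D - x)) :
    terminatesIn D x := by
  set v := D - x with hv
  set K : ℤ := ⌊v * 24⌋ with hK
  have hKle : (K : ℝ) ≤ v * 24 := Int.floor_le _
  have hKgt : v * 24 < (K : ℝ) + 1 := Int.lt_floor_add_one _
  have hne : v * 24 ≠ (K : ℝ) := by
    intro hEq
    exact h24 ⟨K, by rw [hv] at hEq ⊢; linarith⟩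
  have hKlt : (K : ℝ) < v * 24 := lt_of_le_of_ne hKle (Ne.symm hne)
  have hsnap : step Mstar D x = D - (1/24 : ℝ) * ((K : ℝ) + 1) := by
    rw [step_pos h0, MR_snap h24 hcls]
    rw [hv]; ring
  set A : ℝ := (1/24 : ℝ) * ((K : ℝ) + 1) with hA
  have hAgt : v < A := by rw [hA]; nlinarith
  have hAle : A < v + 1/24 := by rw [hA]; nlinarith
  rcases lt_trichotomy A D with hAD | hAD | hAD
  · -- undershoot: now a walk state
    apply term_of_step
    rw [hsnap]
    have h0' : 0 < D - A := by linarith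
    obtain ⟨k, hk⟩ := exists_nat_ge (24 * D)
    apply walkOnly k hD h0' ⟨K + 1, by push_cast; ring⟩
    have hv0 : 0 ≤ v := by rw [hv]; linarith
    have : D - A < D := by linarith
    linarith
  · exact term_of_eq (by rw [hsnap, hAD]; ring)
  · -- overshoot: crossing
    apply term_of_step
    rw [hsnap]
    have hx2 : D - A < 0 := by linarith
    have hxlo : -(1/24 : ℝ) < D - A := by
      have : x = D - v := by rw [hv]; ring
      linarith
    apply e1Climb hD hx2 hxlo
    exact ⟨K + 1, by rw [show D - (D - A) = A by ring, hA]; push_cast; ring⟩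

lemma notGrid24 {w : ℝ} {m : ℤ} (hw : w = (m : ℝ) * (1/72 : ℝ)) (h3 : ¬ (3 ∣ m)) :
    ¬ ∃ n : ℤ, w = (n : ℝ) * (1/24 : ℝ) := by
  rintro ⟨n, hn⟩
  apply h3
  have : (m : ℝ) = 3 * n := by
    rw [hn] at hw
    field_simp at hw
    linarith
  exact ⟨n, by exact_mod_cast this⟩

lemma floor72 {w : ℝ} {m : ℤ} (hw : w = (m : ℝ) * (1/72 : ℝ)) : ⌊w * 72⌋ = m := by
  rw [hw]
  have : (m : ℝ) * (1/72) * 72 = (m : ℝ) := by ring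
  rw [this, Int.floor_intCast]

/-- Even echo chain. -/
lemma echoE : ∀ (k : ℕ) {D x : ℝ} (N : ℤ), 1 < D → 0 < x → D - x = (N : ℝ) * (1/72 : ℝ) →
    ¬ (3 ∣ N) → Even N → (24 : ℤ) ≤ N →
    (72 * D : ℝ) ≤ |(N : ℝ) - 36| * 2^k + 36 → terminatesIn D x := by
  intro k
  induction k with
  | zero =>
    intro D x N hD h0 hvN h3 hNe hN24 hmeas
    exfalso
    have hNlt : (N : ℝ) < 72 * D := by
      have : (N : ℝ) * (1/72) < D := by linarith
      linarith
    have hN24' : (24 : ℝ) ≤ (N : ℝ) := by exact_mod_cast hN24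
    rcases abs_cases ((N : ℝ) - 36) with ⟨ha, -⟩ | ⟨ha, -⟩ <;> rw [ha] at hmeas <;> nlinarith
  | succ k ih =>
    intro D x N hD h0 hvN h3 hNe hN24 hmeas
    have hN24' : (24 : ℝ) ≤ (N : ℝ) := by exact_mod_cast hN24
    have h13 : (1/3 : ℝ) ≤ D - x := by rw [hvN]; linarith
    apply term_of_step
    rw [step_pos h0, MR_echo (notGrid24 hvN h3) ⟨N, hvN⟩ h13, floor72 hvN,
      if_pos hNe]
    set y := x + (1/2 - (D - x)) with hy
    have hDy : D + y = 2 * x + 1/2 := by rw [hy]; ring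
    have hvy : D - y = ((2*N - 36 : ℤ) : ℝ) * (1/72 : ℝ) := by
      rw [hy, show D - (x + (1/2 - (D - x))) = 2*(D - x) - 1/2 by ring, hvN]
      push_cast; ring
    clear_value y
    rcases lt_trichotomy y 0 with hc | hc | hc
    · apply leftAll 5 hD hc
      rw [hDy]
      norm_num
      linarith
    · rw [hc]; exact term_zero D
    · set N' : ℤ := 2*N - 36 with hN'
      have h3' : ¬ (3 ∣ N') := by omega
      by_cases h24' : (24 : ℤ) ≤ N'
      · apply ih N' hD hc hvy h3' ⟨N - 18, by omega⟩ h24'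
        have habs : |(N' : ℝ) - 36| = 2 * |(N : ℝ) - 36| := by
          rw [show ((N' : ℝ)) - 36 = 2 * ((N : ℝ) - 36) by push_cast [hN']; ring, abs_mul]
          norm_num
        rw [habs]
        rw [pow_succ] at hmeas
        linarith
      · push_neg at h24'
        have hyD : y ≤ D := by
          have : (0:ℝ) < (N' : ℝ) * (1/72) := by
            have h12 : (12 : ℤ) ≤ N' := by omega
            have : (12 : ℝ) ≤ (N' : ℝ) := by exact_mod_cast h12
            linarith
          linarith [hvy ▸ this]
        apply snapStart hD hc hyD (notGrid24 hvy h3')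
        rintro ⟨-, hge⟩
        rw [hvy] at hge
        have : (24 : ℝ) ≤ (N' : ℝ) := by linarith
        have : (24 : ℤ) ≤ N' := by exact_mod_cast this
        omega

/-- Odd echo step. -/
lemma echoO {D x : ℝ} (N : ℤ) (hD : 1 < D) (h0 : 0 < x)
    (hvN : D - x = (N : ℝ) * (1/72 : ℝ)) (h3 : ¬ (3 ∣ N)) (hNo : Odd N)
    (hN24 : (24 : ℤ) ≤ N) : terminatesIn D x := by
  have hN24' : (24 : ℝ) ≤ (N : ℝ) := by exact_mod_cast hN24
  have h13 : (1/3 : ℝ) ≤ D - x := by rw [hvN]; linarith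
  apply term_of_step
  rw [step_pos h0, MR_echo (notGrid24 hvN h3) ⟨N, hvN⟩ h13, floor72 hvN,
    if_neg (Int.not_even_iff_odd.mpr hNo)]
  set y := x + (7/12 - (D - x)) with hy
  have hDy : D + y = 2 * x + 7/12 := by rw [hy]; ring
  have hvy : D - y = ((2*N - 42 : ℤ) : ℝ) * (1/72 : ℝ) := by
    rw [hy, show D - (x + (7/12 - (D - x))) = 2*(D - x) - 7/12 by ring, hvN]
    push_cast; ring
  clear_value y
  rcases lt_trichotomy y 0 with hc | hc | hc
  · apply leftAll 2 hD hc
    rw [hDy]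
    norm_num
    linarith
  · rw [hc]; exact term_zero D
  · set N' : ℤ := 2*N - 42 with hN'
    have h3' : ¬ (3 ∣ N') := by omega
    by_cases h24' : (24 : ℤ) ≤ N'
    · have hsplit : N' ≤ 34 ∨ 38 ≤ N' := by
        rcases hNo with ⟨c, hcc⟩
        omega
      have habs2 : (2 : ℝ) ≤ |(N' : ℝ) - 36| := by
        rcases hsplit with hs | hs
        · have : (N' : ℝ) ≤ 34 := by exact_mod_cast hs
          rw [abs_of_nonpos (by linarith)]; linarith
        · have : (38 : ℝ) ≤ (N' : ℝ) := by exact_mod_cast hs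
          rw [abs_of_nonneg (by linarith)]; linarith
      obtain ⟨k, hk⟩ := pow_unbounded_of_one_lt (36 * D) (by norm_num : (1:ℝ) < 2)
      apply echoE k N' hD hc hvy h3' ⟨N - 21, by omega⟩ h24'
      have hp : (0:ℝ) < 2^k := by positivity
      nlinarith
    · push_neg at h24'
      have hyD : y ≤ D := by
        have h6 : (6 : ℤ) ≤ N' := by omega
        have h6' : (6 : ℝ) ≤ (N' : ℝ) := by exact_mod_cast h6
        nlinarith [hvy]
      apply snapStart hD hc hyD (notGrid24 hvy h3')
      rintro ⟨-, hge⟩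
      rw [hvy] at hge
      have : (24 : ℝ) ≤ (N' : ℝ) := by linarith
      have : (24 : ℤ) ≤ N' := by exact_mod_cast this
      omega

/-- Every right position terminates. -/
lemma rightAll {D x : ℝ} (hD : 1 < D) (h0 : 0 < x) (hxD : x ≤ D) : terminatesIn D x := by
  by_cases h24 : ∃ n : ℤ, D - x = (n : ℝ) * (1/24 : ℝ)
  · obtain ⟨k, hk⟩ := exists_nat_ge (24 * D)
    exact walkOnly k hD h0 h24 (by linarith)
  · by_cases h72 : ∃ m : ℤ, D - x = (m : ℝ) * (1/72 : ℝ)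
    · obtain ⟨m, hm⟩ := h72
      have h3m : ¬ (3 ∣ m) := by
        rintro ⟨c, hc⟩
        exact h24 ⟨c, by rw [hm, hc]; push_cast; ring⟩
      by_cases h24m : (24 : ℤ) ≤ m
      · rcases Int.even_or_odd m with hme | hmo
        · have hm36 : m ≠ 36 := by
            intro hEq
            exact h3m (by omega)
          have hsplit : m ≤ 34 ∨ 38 ≤ m := by
            rcases hme with ⟨c, hcc⟩
            omega
          have habs2 : (2 : ℝ) ≤ |(m : ℝ) - 36| := by
            rcases hsplit with hs | hs
            · have : (m : ℝ) ≤ 34 := by exact_mod_cast hs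
              rw [abs_of_nonpos (by linarith)]; linarith
            · have : (38 : ℝ) ≤ (m : ℝ) := by exact_mod_cast hs
              rw [abs_of_nonneg (by linarith)]; linarith
          obtain ⟨k, hk⟩ := pow_unbounded_of_one_lt (36 * D) (by norm_num : (1:ℝ) < 2)
          apply echoE k m hD h0 hm h3m hme h24m
          have hp : (0:ℝ) < 2^k := by positivity
          nlinarith
        · exact echoO m hD h0 hm h3m hmo h24m
      · push_neg at h24m
        apply snapStart hD h0 hxD h24
        rintro ⟨-, hge⟩
        rw [hm] at hge
        have : (24 : ℝ) ≤ (m : ℝ) := by linarith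
        have : (24 : ℤ) ≤ m := by exact_mod_cast this
        omega
    · apply snapStart hD h0 hxD h24
      rintro ⟨h72', -⟩
      exact h72 h72'

lemma imodBounds (y : ℝ) : 0 ≤ y - (1/36 : ℝ) * ⌊y * 36⌋ ∧ y - (1/36 : ℝ) * ⌊y * 36⌋ < 1/36 := by
  have h1 : (⌊y * 36⌋ : ℝ) ≤ y * 36 := Int.floor_le _
  have h2 : y * 36 < (⌊y * 36⌋ : ℝ) + 1 := Int.lt_floor_add_one _
  constructor <;> linarith

/-- The dynamics preserves the interval `[-D, D]`. -/
lemma stepInv {D x : ℝ} (hD : 1 < D) (hx : x ∈ Set.Icc (-D) D) :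
    step Mstar D x ∈ Set.Icc (-D) D := by
  obtain ⟨hx1, hx2⟩ := hx
  rcases lt_trichotomy x 0 with hneg | hzero | hpos
  · -- left side
    rw [step_neg hneg]
    by_cases hb0 : (1/2 : ℝ) < D + x ∧ D + x < 5/9
    · rw [ML_band0 hb0.1 hb0.2]
      obtain ⟨hi1, hi2⟩ := imodBounds (((D + x) - 1/2) / 2 - (D + x))
      constructor <;> nlinarith
    · by_cases hb1 : (7/12 : ℝ) < D + x ∧ D + x < 23/36
      · rw [ML_band1 hb1.1 hb1.2]
        obtain ⟨hi1, hi2⟩ := imodBounds (1/72 + ((D + x) - 7/12) / 2 - (D + x))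
        constructor <;> nlinarith
      · rw [ML_climb hb0 hb1]
        constructor <;> nlinarith
  · rw [hzero]
    simp only [step, lt_irrefl, if_false]
    norm_num
    linarith
  · -- right side
    rw [step_pos hpos]
    by_cases h24 : ∃ n : ℤ, D - x = (n : ℝ) * (1/24 : ℝ)
    · rw [MR_walk h24]
      constructor <;> nlinarith
    · by_cases hcls : (∃ n : ℤ, D - x = (n : ℝ) * (1/72 : ℝ)) ∧ (1/3 : ℝ) ≤ D - x
      · rw [MR_echo h24 hcls.1 hcls.2]
        have h13 := hcls.2
        split_ifs <;> constructor <;> nlinarith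
      · rw [MR_snap h24 hcls]
        have hKle : (⌊(D - x) * 24⌋ : ℝ) ≤ (D - x) * 24 := Int.floor_le _
        have hKgt : (D - x) * 24 < (⌊(D - x) * 24⌋ : ℝ) + 1 := Int.lt_floor_add_one _
        constructor <;> nlinarith


theorem non_cantor_length_solvable :
    ∃ M : Side × ℝ → ℝ, ∀ D : ℝ, 1 < D → D ∉ ternaryCantorSetEx →
      (∀ x ∈ Set.Icc (-D) D, step M D x ∈ Set.Icc (-D) D) ∧
      (∀ x₀ ∈ Set.Icc (-D) D, ∃ n : ℕ, (step M D)^[n] x₀ = 0) := by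
  refine ⟨Mstar, fun D hD _ => ⟨fun x hx => stepInv hD hx, fun x₀ hx₀ => ?_⟩⟩
  rcases lt_trichotomy x₀ 0 with hneg | hzero | hpos
  · refine leftAll 23 hD hneg ?_
    have h1 := hx₀.1
    push_cast
    linarith
  · exact ⟨0, hzero⟩
  · exact rightAll hD hpos hx₀.2
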